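/- arXiv:2309.12948 — 2 statements merged into one kernel-verified Lean document; each statement's English description precedes it below -/
import Mathlib

section
/- Let N ≥ 2 be an integer and let s ∈ (1/2, 1). Then there exists a constant C > 0, depending only on N and s, such that for every measurable radial function u : ℝ^N → ℝ that is non-negative and radially non-decreasing on B_1, with ∫_{B_1} u² dx < ∞ and finite Gagliardo seminorm [u]_s on B_1, one has esssup_{B_1} |u| ≤ C ( (∫_{B_1} u² dx)^{1/2} + [u]_s ). (This is the content of Lemma 3.1(i): the L∞ norm of u on B_1 is controlled by the L² norm plus the fractional Sobolev seminorm, which in particular is dominated by the full mixed norm ‖u‖_X used in the paper.) -/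
open MeasureTheory Metric

/-- The squared `L²` integral of `u` on the unit ball, as an extended nonnegative real. -/
noncomputable def sqIntegral (N : ℕ) (u : EuclideanSpace ℝ (Fin N) → ℝ) : ENNReal :=
  ∫⁻ x in ball (0 : EuclideanSpace ℝ (Fin N)) 1, ENNReal.ofReal ((u x) ^ 2)

/-- The squared Gagliardo seminorm of `u` on the unit ball. -/
noncomputable def gagliardoSq (N : ℕ) (s : ℝ) (u : EuclideanSpace ℝ (Fin N) → ℝ) : ENNReal :=
  ∫⁻ x in ball (0 : EuclideanSpace ℝ (Fin N)) 1,
    ∫⁻ y in ball (0 : EuclideanSpace ℝ (Fin N)) 1,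
      ENNReal.ofReal ((u x - u y) ^ 2 / ‖x - y‖ ^ ((N : ℝ) + 2 * s))

/-!
Fix a unit vector `e` and look at `u` along the radii `1 - 2⁻ᵏ`. If `u` increases by `g` between
the radii `1 - γ/2` and `1 - γ/4`, then by monotonicity every point `x` of the annulus
`1 - γ ≤ ‖x‖ < 1 - γ/2` sees a ball of radius `γ/32`, at distance at most `γ` from `x` and lying in
`1 - γ/4 ≤ ‖y‖ < 1`, on which `u ≥ u x + g`. Integrating over these pairs gives
`g² γ^(N+1) ≲ γ^(N+2s) [u]_s²`, i.e. `g ≲ γ^(s-1/2) [u]_s`. For `s > 1/2` these increments are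
geometrically summable along `γ = 2⁻ᵏ`, so on `B_1` the function `u` exceeds its value at radius
`3/4` by at most `C [u]_s`; that value is bounded by the `L²` norm on the annulus `3/4 ≤ ‖x‖ < 1`,
where `u` is at least as large.
-/

open Module
open scoped ENNReal

theorem sub_mul_pow_le_pow_succ_sub_pow_succ {r R : ℝ} (hr : 0 ≤ r) (hrR : r ≤ R) (n : ℕ) :
    (R - r) * r ^ n ≤ R ^ (n + 1) - r ^ (n + 1) := by
  have := mul_le_mul_of_nonneg_left (pow_le_pow_left₀ hr hrR n) (hr.trans hrR)
  rw [pow_succ', pow_succ']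
  nlinarith

theorem le_add_div_one_sub_of_sub_le_geometric {a : ℕ → ℝ} {c θ : ℝ} (hc : 0 ≤ c) (hθ0 : 0 ≤ θ)
    (hθ1 : θ < 1) (h : ∀ k, a (k + 1) - a k ≤ c * θ ^ k) (n : ℕ) : a n ≤ a 0 + c / (1 - θ) := by
  have hsum : a n - a 0 ≤ c * ∑ k ∈ Finset.range n, θ ^ k := by
    rw [← Finset.sum_range_sub, Finset.mul_sum]
    exact Finset.sum_le_sum fun k _ => h k
  have hgeom : ∑ k ∈ Finset.range n, θ ^ k ≤ 1 / (1 - θ) := by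
    simpa using geom_sum_Ico_le_of_lt_one (m := 0) (n := n) hθ0 hθ1
  have := mul_le_mul_of_nonneg_left hgeom hc
  rw [mul_one_div] at this
  linarith

theorem le_mul_sqrt_of_sq_le_sq_mul {a K X : ℝ} (hK : 0 ≤ K) (h : a ^ 2 ≤ K ^ 2 * X) :
    a ≤ K * √X := by
  calc a ≤ |a| := le_abs_self a
    _ ≤ √(K ^ 2 * X) := Real.abs_le_sqrt h
    _ = K * √X := by rw [Real.sqrt_mul (sq_nonneg K), Real.sqrt_sq hK]

theorem mul_mul_measure_le_lintegral_lintegral {α : Type*} [MeasurableSpace α] {μ : Measure α}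
    {A B : Set α} {F : α → Set α} {W : α → α → ℝ≥0∞} {κ v : ℝ≥0∞} (hA : MeasurableSet A)
    (hAB : A ⊆ B) (hF : ∀ x, MeasurableSet (F x)) (hFB : ∀ x ∈ A, F x ⊆ B)
    (hW : ∀ x ∈ A, ∀ y ∈ F x, κ ≤ W x y) (hv : ∀ x ∈ A, v ≤ μ (F x)) :
    κ * v * μ A ≤ ∫⁻ x in B, ∫⁻ y in B, W x y ∂μ ∂μ :=
  calc κ * v * μ A = ∫⁻ _ in A, κ * v ∂μ := (setLIntegral_const A _).symm
    _ ≤ ∫⁻ x in A, ∫⁻ y in F x, W x y ∂μ ∂μ := setLIntegral_mono' hA fun x hx =>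
      calc κ * v ≤ κ * μ (F x) := by gcongr; exact hv x hx
        _ = ∫⁻ _ in F x, κ ∂μ := (setLIntegral_const _ _).symm
        _ ≤ ∫⁻ y in F x, W x y ∂μ := setLIntegral_mono' (hF x) (hW x hx)
    _ ≤ ∫⁻ x in A, ∫⁻ y in B, W x y ∂μ ∂μ :=
      setLIntegral_mono' hA fun x hx => lintegral_mono_set (hFB x hx)
    _ ≤ ∫⁻ x in B, ∫⁻ y in B, W x y ∂μ ∂μ := lintegral_mono_set hAB

noncomputable def gagliardoEnergy {E : Type*} [NormedAddCommGroup E] [MeasurableSpace E]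
    (μ : Measure E) (p : ℝ) (u : E → ℝ) : ℝ≥0∞ :=
  ∫⁻ x in ball (0 : E) 1, ∫⁻ y in ball (0 : E) 1,
    ENNReal.ofReal ((u x - u y) ^ 2 / ‖x - y‖ ^ p) ∂μ ∂μ

section UnitBall

variable {E : Type*} [NormedAddCommGroup E] [NormedSpace ℝ E]

theorem annulus_bounds_of_mem_ball_radial {γ : ℝ} (hγ : γ < 1) {x y : E}
    (hx : x ∈ ball (0 : E) (1 - γ / 2) \ ball 0 (1 - γ))
    (hy : y ∈ ball ((1 - 3 * γ / 16) • ‖x‖⁻¹ • x) (γ / 32)) :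
    1 - γ / 4 ≤ ‖y‖ ∧ ‖y‖ < 1 ∧ 0 < ‖x - y‖ ∧ ‖x - y‖ ≤ γ := by
  simp only [Set.mem_sdiff, mem_ball_zero_iff, not_lt] at hx
  obtain ⟨hx2, hx1⟩ := hx
  set m := 1 - 3 * γ / 16 with hm
  set c := m • ‖x‖⁻¹ • x
  have hx0 : x ≠ 0 := norm_pos_iff.1 (by linarith)
  have hunit : ‖‖x‖⁻¹ • x‖ = 1 := norm_smul_inv_norm hx0
  have hc : ‖c‖ = m := by rw [norm_smul, hunit, Real.norm_of_nonneg (by linarith), mul_one]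
  have hxc : ‖x - c‖ = m - ‖x‖ := by
    have : x - c = (‖x‖ - m) • ‖x‖⁻¹ • x := by
      rw [sub_smul, smul_inv_smul₀ (norm_ne_zero_iff.2 hx0)]
    rw [this, norm_smul, hunit, mul_one, Real.norm_eq_abs, abs_of_nonpos (by linarith), neg_sub]
  rw [mem_ball, dist_eq_norm] at hy
  obtain ⟨hyc1, hyc2⟩ := abs_lt.1 ((hc ▸ abs_norm_sub_norm_le y c).trans_lt hy)
  have hxy : ‖x - y‖ ≤ ‖x - c‖ + ‖y - c‖ :=
    norm_sub_rev c y ▸ norm_sub_le_norm_sub_add_norm_sub x c y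
  have hyx : ‖y‖ - ‖x‖ ≤ ‖x - y‖ := norm_sub_rev y x ▸ norm_sub_norm_le y x
  refine ⟨by linarith, by linarith, by linarith, by linarith⟩

variable [MeasurableSpace E] [BorelSpace E] [FiniteDimensional ℝ E] [Nontrivial E]
  (μ : Measure E) [μ.IsAddHaarMeasure]

theorem ofReal_mul_le_addHaar_ball_sdiff_ball {r R : ℝ} (hr : 0 ≤ r) (hrR : r ≤ R) :
    ENNReal.ofReal ((R - r) * r ^ (finrank ℝ E - 1)) * μ (ball 0 1) ≤
      μ (ball (0 : E) R \ ball 0 r) := by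
  obtain ⟨n, hn⟩ := Nat.exists_eq_add_of_lt (finrank_pos (R := ℝ) (M := E))
  rw [measure_sdiff (ball_subset_ball hrR) measurableSet_ball.nullMeasurableSet
      measure_ball_lt_top.ne, Measure.addHaar_ball μ _ (hr.trans hrR), Measure.addHaar_ball μ _ hr,
    ← ENNReal.sub_mul fun _ _ => measure_ball_lt_top.ne, ← ENNReal.ofReal_sub _ (by positivity), hn]
  gcongr
  simpa using sub_mul_pow_le_pow_succ_sub_pow_succ hr hrR n

theorem ofReal_mul_sq_le_gagliardoEnergy {u : E → ℝ} {p γ g : ℝ} (hp : 0 ≤ p) (hγ : 0 < γ)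
    (hγ2 : γ ≤ 1 / 2) (hg : 0 ≤ g)
    (hgap : ∀ x y : E, 1 - γ ≤ ‖x‖ → ‖x‖ < 1 - γ / 2 → 1 - γ / 4 ≤ ‖y‖ → ‖y‖ < 1 →
      g ≤ u y - u x) :
    ENNReal.ofReal (g ^ 2 * γ ^ (finrank ℝ E + 1) / (64 ^ finrank ℝ E * γ ^ p)) *
      μ (ball 0 1) ^ 2 ≤ gagliardoEnergy μ p u := by
  set d := finrank ℝ E
  set V := μ (ball (0 : E) 1)
  set A := ball (0 : E) (1 - γ / 2) \ ball 0 (1 - γ)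
  have hd : d ≠ 0 := finrank_pos.ne'
  have hA : ENNReal.ofReal (γ / 2 ^ d) * V ≤ μ A := by
    refine le_trans ?_ (ofReal_mul_le_addHaar_ball_sdiff_ball μ (by linarith) (by linarith))
    gcongr
    calc γ / 2 ^ d = (1 - γ / 2 - (1 - γ)) * (1 / 2) ^ (d - 1) := by
          rw [← pow_sub_one_mul hd, one_div_pow]; field_simp; ring
      _ ≤ _ := by gcongr <;> linarith
  have key := mul_mul_measure_le_lintegral_lintegral (μ := μ) (B := ball 0 1)
    (F := fun x => ball ((1 - 3 * γ / 16) • ‖x‖⁻¹ • x) (γ / 32))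
    (W := fun x y => ENNReal.ofReal ((u x - u y) ^ 2 / ‖x - y‖ ^ p))
    (κ := ENNReal.ofReal (g ^ 2 / γ ^ p)) (v := ENNReal.ofReal ((γ / 32) ^ d) * V)
    (measurableSet_ball.diff measurableSet_ball)
    (Set.sdiff_subset.trans (ball_subset_ball (by linarith))) (fun _ => measurableSet_ball)
    (fun x hx y hy =>
      mem_ball_zero_iff.2 (annulus_bounds_of_mem_ball_radial (by linarith) hx hy).2.1)
    (fun x hx y hy => by
      obtain ⟨hy1, hy2, hxy0, hxy⟩ := annulus_bounds_of_mem_ball_radial (by linarith) hx hy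
      simp only [Set.mem_sdiff, mem_ball_zero_iff, not_lt] at hx
      have hle := hgap x y hx.2 hx.1 hy1 hy2
      gcongr ENNReal.ofReal (?_ / ?_)
      · nlinarith
      · exact Real.rpow_le_rpow (norm_nonneg _) hxy hp)
    (fun x _ => (Measure.addHaar_ball μ _ (by linarith)).ge)
  calc _ = ENNReal.ofReal (g ^ 2 / γ ^ p) * (ENNReal.ofReal ((γ / 32) ^ d) * V) *
        (ENNReal.ofReal (γ / 2 ^ d) * V) := by
        rw [show g ^ 2 * γ ^ (d + 1) / (64 ^ d * γ ^ p) = g ^ 2 / γ ^ p * (γ / 32) ^ d * (γ / 2 ^ d)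
          by rw [div_pow, show (64 : ℝ) ^ d = 32 ^ d * 2 ^ d by rw [← mul_pow]; norm_num]; ring,
          ENNReal.ofReal_mul (by positivity), ENNReal.ofReal_mul (by positivity)]
        ring
    _ ≤ _ := by gcongr
    _ ≤ _ := key

theorem sub_mul_le_mul_sqrt_gagliardoEnergy {u : E → ℝ} {p γ : ℝ} (hp : 0 ≤ p) (hγ : 0 < γ)
    (hγ2 : γ ≤ 1 / 2) (hmono : ∀ x y : E, ‖x‖ ≤ ‖y‖ → ‖y‖ < 1 → u x ≤ u y)
    (hfin : gagliardoEnergy μ p u ≠ ⊤) {e : E} (he : ‖e‖ = 1) :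
    (u ((1 - γ / 4) • e) - u ((1 - γ / 2) • e)) * (μ (ball 0 1)).toReal ≤
      8 ^ finrank ℝ E * γ ^ ((p - finrank ℝ E - 1) / 2) * √(gagliardoEnergy μ p u).toReal := by
  set d := finrank ℝ E
  set g := u ((1 - γ / 4) • e) - u ((1 - γ / 2) • e)
  set t := γ ^ ((p - d - 1) / 2)
  have hnorm : ∀ r : ℝ, 0 ≤ r → ‖r • e‖ = r := fun r hr => by
    rw [norm_smul_of_nonneg hr, he, mul_one]
  have hg : 0 ≤ g := sub_nonneg.2 <| hmono _ _
    (by rw [hnorm _ (by linarith), hnorm _ (by linarith)]; linarith)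
    (by rw [hnorm _ (by linarith)]; linarith)
  have hgap : ∀ x y : E, 1 - γ ≤ ‖x‖ → ‖x‖ < 1 - γ / 2 → 1 - γ / 4 ≤ ‖y‖ → ‖y‖ < 1 →
      g ≤ u y - u x := fun x y _ hx hy hy' =>
    sub_le_sub (hmono _ _ (by rwa [hnorm _ (by linarith)]) hy')
      (hmono _ _ (by rw [hnorm _ (by linarith)]; exact hx.le)
        (by rw [hnorm _ (by linarith)]; linarith))
  have hreal := ENNReal.toReal_mono hfin (ofReal_mul_sq_le_gagliardoEnergy μ hp hγ hγ2 hg hgap)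
  rw [ENNReal.toReal_mul, ENNReal.toReal_ofReal (by positivity), ENNReal.toReal_pow] at hreal
  have ht : γ ^ p = t ^ 2 * γ ^ (d + 1) := by
    rw [← Real.rpow_natCast t, ← Real.rpow_mul hγ.le, ← Real.rpow_natCast γ, ← Real.rpow_add hγ]
    push_cast; ring_nf
  rw [ht, div_mul_eq_mul_div, div_le_iff₀ (by positivity)] at hreal
  refine le_mul_sqrt_of_sq_le_sq_mul (by positivity) (le_of_mul_le_mul_right ?_
    (by positivity : 0 < γ ^ (d + 1)))
  calc (g * (μ (ball 0 1)).toReal) ^ 2 * γ ^ (d + 1)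
      = g ^ 2 * γ ^ (d + 1) * (μ (ball 0 1)).toReal ^ 2 := by ring
    _ ≤ (gagliardoEnergy μ p u).toReal * (64 ^ d * (t ^ 2 * γ ^ (d + 1))) := hreal
    _ = (8 ^ d * t) ^ 2 * (gagliardoEnergy μ p u).toReal * γ ^ (d + 1) := by
        rw [show (64 : ℝ) ^ d = (8 ^ d) ^ 2 by rw [← pow_mul, mul_comm, pow_mul]; norm_num]
        ring

theorem mul_sqrt_le_mul_sqrt_lintegral_sq {u : E → ℝ} (hu : ∀ x ∈ ball (0 : E) 1, 0 ≤ u x)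
    (hmono : ∀ x y : E, ‖x‖ ≤ ‖y‖ → ‖y‖ < 1 → u x ≤ u y)
    (hfin : ∫⁻ x in ball (0 : E) 1, ENNReal.ofReal (u x ^ 2) ∂μ ≠ ⊤) {e : E} (he : ‖e‖ = 1) :
    u ((3 / 4 : ℝ) • e) * √(μ (ball 0 1)).toReal ≤
      2 ^ finrank ℝ E * √(∫⁻ x in ball (0 : E) 1, ENNReal.ofReal (u x ^ 2) ∂μ).toReal := by
  set d := finrank ℝ E
  set b := u ((3 / 4 : ℝ) • e)
  have hd : d ≠ 0 := finrank_pos.ne'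
  have hb_norm : ‖(3 / 4 : ℝ) • e‖ = 3 / 4 := by rw [norm_smul_of_nonneg (by norm_num), he, mul_one]
  have hb : 0 ≤ b := hu _ (mem_ball_zero_iff.2 (by rw [hb_norm]; norm_num))
  have hann : ENNReal.ofReal (1 / 4 ^ d) * μ (ball 0 1) ≤ μ (ball (0 : E) 1 \ ball 0 (3 / 4)) := by
    refine le_trans ?_ (ofReal_mul_le_addHaar_ball_sdiff_ball μ (by norm_num) (by norm_num))
    gcongr
    calc (1 : ℝ) / 4 ^ d = (1 - 3 / 4) * (1 / 4) ^ (d - 1) := by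
          rw [← pow_sub_one_mul hd, one_div_pow]; field_simp; ring
      _ ≤ _ := by gcongr; norm_num
  have hL2 : ENNReal.ofReal (b ^ 2 * (1 / 4 ^ d)) * μ (ball 0 1) ≤
      ∫⁻ x in ball (0 : E) 1, ENNReal.ofReal (u x ^ 2) ∂μ :=
    calc _ = ENNReal.ofReal (b ^ 2) * (ENNReal.ofReal (1 / 4 ^ d) * μ (ball 0 1)) := by
          rw [ENNReal.ofReal_mul (by positivity), mul_assoc]
      _ ≤ ENNReal.ofReal (b ^ 2) * μ (ball (0 : E) 1 \ ball 0 (3 / 4)) := by gcongr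
      _ = ∫⁻ _ in ball (0 : E) 1 \ ball 0 (3 / 4), ENNReal.ofReal (b ^ 2) ∂μ :=
          (setLIntegral_const _ _).symm
      _ ≤ ∫⁻ x in ball (0 : E) 1 \ ball 0 (3 / 4), ENNReal.ofReal (u x ^ 2) ∂μ := by
          refine setLIntegral_mono' (measurableSet_ball.diff measurableSet_ball) fun x hx => ?_
          simp only [Set.mem_sdiff, mem_ball_zero_iff, not_lt] at hx
          gcongr
          exact hmono _ _ (by rw [hb_norm]; exact hx.2) hx.1
      _ ≤ _ := lintegral_mono_set Set.sdiff_subset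
  have hreal := ENNReal.toReal_mono hfin hL2
  rw [ENNReal.toReal_mul, ENNReal.toReal_ofReal (by positivity)] at hreal
  refine le_mul_sqrt_of_sq_le_sq_mul (by positivity) ?_
  rw [mul_pow, Real.sq_sqrt ENNReal.toReal_nonneg, ← pow_mul, mul_comm d, pow_mul]
  norm_num
  rw [mul_one_div, div_mul_eq_mul_div, div_le_iff₀ (by positivity)] at hreal
  linarith

theorem le_add_mul_sqrt_gagliardoEnergy {p : ℝ} (hp : (finrank ℝ E : ℝ) + 1 < p) {u : E → ℝ}
    (hmono : ∀ x y : E, ‖x‖ ≤ ‖y‖ → ‖y‖ < 1 → u x ≤ u y) (hfin : gagliardoEnergy μ p u ≠ ⊤)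
    {e : E} (he : ‖e‖ = 1) {x : E} (hx : x ∈ ball (0 : E) 1) :
    u x ≤ u ((3 / 4 : ℝ) • e) + 8 ^ finrank ℝ E * (2⁻¹ : ℝ) ^ ((p - finrank ℝ E - 1) / 2) /
      ((μ (ball 0 1)).toReal * (1 - (2⁻¹ : ℝ) ^ ((p - finrank ℝ E - 1) / 2))) *
        √(gagliardoEnergy μ p u).toReal := by
  have hgap := fun k : ℕ => sub_mul_le_mul_sqrt_gagliardoEnergy μ (γ := 2⁻¹ ^ (k + 1))
    (by linarith) (by positivity) (by
      have := pow_le_of_le_one (a := (2⁻¹ : ℝ)) (by norm_num) (by norm_num) (by omega : k + 1 ≠ 0)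
      linarith) hmono hfin he
  set ω := (μ (ball (0 : E) 1)).toReal
  have hω : 0 < ω := ENNReal.toReal_pos (measure_ball_pos μ 0 one_pos).ne' measure_ball_lt_top.ne
  set θ : ℝ := 2⁻¹ ^ ((p - finrank ℝ E - 1) / 2)
  have hθ0 : 0 < θ := by positivity
  have hθ1 : θ < 1 := Real.rpow_lt_one (by norm_num) (by norm_num) (by linarith)
  set Γ := (gagliardoEnergy μ p u).toReal
  have hr : ∀ k : ℕ, 0 < (2⁻¹ : ℝ) ^ (k + 2) ∧ (2⁻¹ : ℝ) ^ (k + 2) ≤ 1 / 4 := fun k =>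
    ⟨by positivity, by
      have := pow_le_pow_of_le_one (a := (2⁻¹ : ℝ)) (by norm_num) (by norm_num)
        (by omega : 2 ≤ k + 2)
      norm_num at this ⊢; exact this⟩
  have hnorm : ∀ k : ℕ, ‖(1 - 2⁻¹ ^ (k + 2) : ℝ) • e‖ = 1 - 2⁻¹ ^ (k + 2) := fun k => by
    rw [norm_smul_of_nonneg (by linarith [hr k]), he, mul_one]
  set b : ℕ → ℝ := fun k => u ((1 - 2⁻¹ ^ (k + 2) : ℝ) • e)
  have hb : ∀ k, b (k + 1) - b k ≤ 8 ^ finrank ℝ E * θ * √Γ / ω * θ ^ k := fun k => by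
    have h := hgap k
    rw [show (1 - 2⁻¹ ^ (k + 1) / 4 : ℝ) = 1 - 2⁻¹ ^ (k + 1 + 2) by ring,
      show (1 - 2⁻¹ ^ (k + 1) / 2 : ℝ) = 1 - 2⁻¹ ^ (k + 2) by ring,
      ← Real.rpow_pow_comm (by norm_num), ← le_div_iff₀ hω] at h
    calc b (k + 1) - b k ≤ _ := h
      _ = _ := by ring
  obtain ⟨n, hn⟩ := exists_pow_lt_of_lt_one (sub_pos.2 (mem_ball_zero_iff.1 hx))
    (by norm_num : (2⁻¹ : ℝ) < 1)
  have hn' := pow_le_pow_of_le_one (a := (2⁻¹ : ℝ)) (by norm_num) (by norm_num)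
    (by omega : n ≤ n + 2)
  calc u x ≤ b n := hmono _ _ (by rw [hnorm]; linarith) (by rw [hnorm]; linarith [hr n])
    _ ≤ b 0 + 8 ^ finrank ℝ E * θ * √Γ / ω / (1 - θ) :=
      le_add_div_one_sub_of_sub_le_geometric (by positivity) hθ0.le hθ1 hb n
    _ = _ := by
      rw [show b 0 = u ((3 / 4 : ℝ) • e) by norm_num [b]]
      field_simp

theorem exists_forall_le_mul_sqrt_add_sqrt {p : ℝ} (hp : (finrank ℝ E : ℝ) + 1 < p) :
    ∃ C > 0, ∀ u : E → ℝ, (∀ x ∈ ball (0 : E) 1, 0 ≤ u x) →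
      (∀ x y : E, ‖x‖ ≤ ‖y‖ → ‖y‖ < 1 → u x ≤ u y) →
      ∫⁻ x in ball (0 : E) 1, ENNReal.ofReal (u x ^ 2) ∂μ ≠ ⊤ → gagliardoEnergy μ p u ≠ ⊤ →
      ∀ x ∈ ball (0 : E) 1,
        u x ≤ C * (√(∫⁻ x in ball (0 : E) 1, ENNReal.ofReal (u x ^ 2) ∂μ).toReal +
          √(gagliardoEnergy μ p u).toReal) := by
  obtain ⟨e, he⟩ := exists_norm_eq E zero_le_one
  set ω := (μ (ball (0 : E) 1)).toReal
  have hω : 0 < ω := ENNReal.toReal_pos (measure_ball_pos μ 0 one_pos).ne' measure_ball_lt_top.ne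
  set θ : ℝ := 2⁻¹ ^ ((p - finrank ℝ E - 1) / 2)
  have hθ1 : θ < 1 := Real.rpow_lt_one (by norm_num) (by norm_num) (by linarith)
  refine ⟨max (2 ^ finrank ℝ E / √ω) (8 ^ finrank ℝ E * θ / (ω * (1 - θ))), by positivity,
    fun u hu hmono hL2 hG x hx => ?_⟩
  have hL2_bound := mul_sqrt_le_mul_sqrt_lintegral_sq μ hu hmono hL2 he
  rw [← le_div_iff₀ (by positivity), mul_div_right_comm] at hL2_bound
  calc u x ≤ _ := le_add_mul_sqrt_gagliardoEnergy μ hp hmono hG he hx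
    _ ≤ _ := by
      rw [mul_add]
      gcongr
      · exact hL2_bound.trans (by gcongr; exact le_max_left _ _)
      · exact le_max_right _ _

end UnitBall

theorem ENNReal.rpow_one_half_eq_ofReal_sqrt_toReal {a : ℝ≥0∞} (ha : a ≠ ⊤) :
    a ^ (1 / 2 : ℝ) = ENNReal.ofReal √a.toReal := by
  rw [Real.sqrt_eq_rpow, ← ENNReal.ofReal_rpow_of_nonneg ENNReal.toReal_nonneg (by norm_num),
    ENNReal.ofReal_toReal ha]

theorem radial_nondecreasing_essSup_bound_general
    (N : ℕ) (hN : 2 ≤ N) (s : ℝ) (hs : 1 / 2 < s) :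
    ∃ C : ℝ, 0 < C ∧
      ∀ u : EuclideanSpace ℝ (Fin N) → ℝ, Measurable u →
        (∀ x y : EuclideanSpace ℝ (Fin N), ‖x‖ = ‖y‖ → u x = u y) →
        (∀ x ∈ ball (0 : EuclideanSpace ℝ (Fin N)) 1, 0 ≤ u x) →
        (∀ x y : EuclideanSpace ℝ (Fin N), ‖x‖ ≤ ‖y‖ → ‖y‖ < 1 → u x ≤ u y) →
        sqIntegral N u < ⊤ →
        gagliardoSq N s u < ⊤ →
        essSup (fun x => ENNReal.ofReal |u x|)
            (volume.restrict (ball (0 : EuclideanSpace ℝ (Fin N)) 1)) ≤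
          ENNReal.ofReal C *
            ((sqIntegral N u) ^ (1 / 2 : ℝ) + (gagliardoSq N s u) ^ (1 / 2 : ℝ)) := by
  have : Nontrivial (EuclideanSpace ℝ (Fin N)) :=
    finrank_pos_iff.1 (by rw [finrank_euclideanSpace_fin]; omega)
  obtain ⟨C, hC, hbound⟩ := exists_forall_le_mul_sqrt_add_sqrt
    (volume : Measure (EuclideanSpace ℝ (Fin N))) (p := N + 2 * s)
    (by rw [finrank_euclideanSpace_fin]; linarith)
  refine ⟨C, hC, fun u _ _ hu hmono hL2 hG => essSup_le_of_ae_le _ ?_⟩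
  filter_upwards [ae_restrict_mem measurableSet_ball] with x hx
  rw [abs_of_nonneg (hu x hx), ENNReal.rpow_one_half_eq_ofReal_sqrt_toReal hL2.ne,
    ENNReal.rpow_one_half_eq_ofReal_sqrt_toReal hG.ne, ← ENNReal.ofReal_add (by positivity)
    (by positivity), ← ENNReal.ofReal_mul hC.le]
  exact ENNReal.ofReal_le_ofReal (hbound u hu hmono hL2.ne hG.ne x hx)

/-- Lemma 3.1(i): for non-negative radially non-decreasing radial functions,
the `L^∞` norm on the unit ball is controlled by the `L²` norm plus the Gagliardo seminorm. -/
theorem radial_nondecreasing_essSup_bound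
    (N : ℕ) (hN : 2 ≤ N) (s : ℝ) (hs : 1 / 2 < s) (hs1 : s < 1) :
    ∃ C : ℝ, 0 < C ∧
      ∀ u : EuclideanSpace ℝ (Fin N) → ℝ, Measurable u →
        (∀ x y : EuclideanSpace ℝ (Fin N), ‖x‖ = ‖y‖ → u x = u y) →
        (∀ x ∈ ball (0 : EuclideanSpace ℝ (Fin N)) 1, 0 ≤ u x) →
        (∀ x y : EuclideanSpace ℝ (Fin N), ‖x‖ ≤ ‖y‖ → ‖y‖ < 1 → u x ≤ u y) →
        sqIntegral N u < ⊤ →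
        gagliardoSq N s u < ⊤ →
        essSup (fun x => ENNReal.ofReal |u x|)
            (volume.restrict (ball (0 : EuclideanSpace ℝ (Fin N)) 1)) ≤
          ENNReal.ofReal C *
            ((sqIntegral N u) ^ (1 / 2 : ℝ) + (gagliardoSq N s u) ^ (1 / 2 : ℝ)) :=
  radial_nondecreasing_essSup_bound_general N hN s hs
end

section
/- Let N ≥ 1 be an integer and s ∈ (0,1). Let u : ℝ^N → ℝ and φ : ℝ^N → ℝ be measurable functions such that φ(x) = 0 for all x in the closed unit ball, the function (x,y) ↦ (u(x) − u(y))(φ(x) − φ(y)) / |x − y|^{N+2s} is integrable on Q = ℝ^{2N} \ (B_1^c × B_1^c), and the function (x,y) ↦ (u(x) − u(y)) φ(x) / |x − y|^{N+2s} is integrable on (ℝ^N \ closure(B_1)) × B_1. Then ∬_Q (u(x) − u(y))(φ(x) − φ(y)) / |x − y|^{N+2s} dx dy = 2 ∫_{ℝ^N \ closure(B_1)} 𝒩_s u(x) φ(x) dx, where 𝒩_s u(x) = ∫_{B_1} (u(x) − u(y)) / |x − y|^{N+2s} dy. -/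
/-!
The kernel `(u x - u y) (φ x - φ y) / |x - y|^(N+2s)` is symmetric in `(x, y)` and vanishes on
`B₁ × B₁` because `φ` does, so its integral over `Q` is twice its integral over `B₁ᶜ × B₁`.
There `φ y = 0`, the kernel reduces to `(u x - u y) φ x / |x - y|^(N+2s)`, the unit sphere is
Lebesgue-null so `B₁ᶜ` may be replaced by the complement of the closed ball, and Fubini's theorem
turns the double integral into `∫ 𝒩ₛ u · φ`.
-/

open MeasureTheory Metric Set

theorem ball_ae_eq_closedBall {E : Type*} [NormedAddCommGroup E] [NormedSpace ℝ E]
    [MeasurableSpace E] [BorelSpace E] [FiniteDimensional ℝ E] (μ : Measure E)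
    [μ.IsAddHaarMeasure] (x : E) {r : ℝ} (hr : r ≠ 0) : ball x r =ᵐ[μ] closedBall x r := by
  rw [ae_eq_set, sdiff_eq_empty.2 ball_subset_closedBall, closedBall_sdiff_ball]
  exact ⟨measure_empty, Measure.addHaar_sphere_of_ne_zero μ x hr⟩

theorem compl_prod_compl_compl_eq_union {α : Type*} (A : Set α) :
    (Aᶜ ×ˢ Aᶜ)ᶜ = A ×ˢ A ∪ (A ×ˢ Aᶜ ∪ Aᶜ ×ˢ A) := by
  ext ⟨x, y⟩
  by_cases hx : x ∈ A <;> by_cases hy : y ∈ A <;> simp [hx, hy]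

theorem setIntegral_compl_prod_compl_compl_eq_two_nsmul {α F : Type*} [MeasurableSpace α]
    [NormedAddCommGroup F] [NormedSpace ℝ F] {μ : Measure α} [SFinite μ] {A : Set α}
    (hA : MeasurableSet A) {f : α × α → F} (hf : IntegrableOn f (Aᶜ ×ˢ Aᶜ)ᶜ (μ.prod μ))
    (hf_swap : ∀ z, f z.swap = f z) (hf_zero : EqOn f 0 (A ×ˢ A)) :
    ∫ z in (Aᶜ ×ˢ Aᶜ)ᶜ, f z ∂μ.prod μ = 2 • ∫ z in Aᶜ ×ˢ A, f z ∂μ.prod μ := by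
  have hQ := compl_prod_compl_compl_eq_union A
  have h_in : A ×ˢ Aᶜ ∪ Aᶜ ×ˢ A ⊆ (Aᶜ ×ˢ Aᶜ)ᶜ := hQ ▸ subset_union_right
  have h_disj : Disjoint (A ×ˢ A) (A ×ˢ Aᶜ ∪ Aᶜ ×ˢ A) :=
    disjoint_union_right.2 ⟨disjoint_prod.2 (Or.inr disjoint_compl_right),
      disjoint_prod.2 (Or.inl disjoint_compl_right)⟩
  have h_zero : ∫ z in A ×ˢ A, f z ∂μ.prod μ = 0 := setIntegral_eq_zero_of_forall_eq_zero hf_zero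
  have h_swap : ∫ z in A ×ˢ Aᶜ, f z ∂μ.prod μ = ∫ z in Aᶜ ×ˢ A, f z ∂μ.prod μ := by
    simpa only [hf_swap] using setIntegral_prod_swap (μ := μ) (ν := μ) Aᶜ A f
  rw [hQ, setIntegral_union h_disj ((hA.prod hA.compl).union (hA.compl.prod hA))
      (hf.mono_set (hQ ▸ subset_union_left)) (hf.mono_set h_in),
    setIntegral_union (disjoint_prod.2 (Or.inl disjoint_compl_right)) (hA.compl.prod hA)
      (hf.mono_set (subset_union_left.trans h_in)) (hf.mono_set (subset_union_right.trans h_in)),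
    h_zero, h_swap, zero_add, two_nsmul]

theorem nonlocal_neumann_integration_by_parts_general
    (N : ℕ) (s : ℝ)
    (u φ : EuclideanSpace ℝ (Fin N) → ℝ)
    (hφ : ∀ x ∈ closedBall (0 : EuclideanSpace ℝ (Fin N)) 1, φ x = 0)
    (h₁ : IntegrableOn
      (fun z : EuclideanSpace ℝ (Fin N) × EuclideanSpace ℝ (Fin N) =>
        (u z.1 - u z.2) * (φ z.1 - φ z.2) / ‖z.1 - z.2‖ ^ ((N : ℝ) + 2 * s))
      (((ball (0 : EuclideanSpace ℝ (Fin N)) 1)ᶜ ×ˢ (ball (0 : EuclideanSpace ℝ (Fin N)) 1)ᶜ)ᶜ))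
    (h₂ : IntegrableOn
      (fun z : EuclideanSpace ℝ (Fin N) × EuclideanSpace ℝ (Fin N) =>
        (u z.1 - u z.2) * φ z.1 / ‖z.1 - z.2‖ ^ ((N : ℝ) + 2 * s))
      ((closedBall (0 : EuclideanSpace ℝ (Fin N)) 1)ᶜ ×ˢ ball (0 : EuclideanSpace ℝ (Fin N)) 1)) :
    (∫ z in (((ball (0 : EuclideanSpace ℝ (Fin N)) 1)ᶜ ×ˢ
        (ball (0 : EuclideanSpace ℝ (Fin N)) 1)ᶜ)ᶜ),
      (u z.1 - u z.2) * (φ z.1 - φ z.2) / ‖z.1 - z.2‖ ^ ((N : ℝ) + 2 * s)) =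
    2 * ∫ x in (closedBall (0 : EuclideanSpace ℝ (Fin N)) 1)ᶜ,
      (∫ y in ball (0 : EuclideanSpace ℝ (Fin N)) 1,
        (u x - u y) / ‖x - y‖ ^ ((N : ℝ) + 2 * s)) * φ x := by
  set B := ball (0 : EuclideanSpace ℝ (Fin N)) 1
  have hφB : ∀ y ∈ B, φ y = 0 := fun y hy => hφ y (ball_subset_closedBall hy)
  have h_sphere : Bᶜ ×ˢ B =ᵐ[volume.prod volume] (closedBall 0 1)ᶜ ×ˢ B :=
    Measure.set_prod_ae_eq (ball_ae_eq_closedBall volume 0 one_ne_zero).compl (ae_eq_refl B)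
  rw [Measure.volume_eq_prod] at h₁ h₂ ⊢
  rw [setIntegral_compl_prod_compl_compl_eq_two_nsmul measurableSet_ball h₁
      (fun z => by simp only [Prod.fst_swap, Prod.snd_swap, norm_sub_rev z.2]; ring)
      (fun z hz => by simp [hφB _ hz.1, hφB _ hz.2]),
    setIntegral_congr_fun (measurableSet_ball.compl.prod measurableSet_ball)
      (g := fun z => (u z.1 - u z.2) * φ z.1 / ‖z.1 - z.2‖ ^ ((N : ℝ) + 2 * s))
      (fun z hz => by simp only [hφB _ hz.2, sub_zero]),
    setIntegral_congr_set h_sphere, setIntegral_prod _ h₂, nsmul_eq_mul, Nat.cast_ofNat]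
  congr 2 with x
  rw [← integral_mul_const]
  congr 1 with y
  ring

/-- nonlocal integration-by-parts identity relating the Gagliardo-type bilinear
form over `Q = ℝ^{2N} \ (B₁ᶜ × B₁ᶜ)` to the nonlocal Neumann operator `𝒩ₛ u`, for test
functions `φ` vanishing on the closed unit ball. -/
theorem nonlocal_neumann_integration_by_parts
    (N : ℕ) (hN : 1 ≤ N) (s : ℝ) (hs : 0 < s) (hs1 : s < 1)
    (u φ : EuclideanSpace ℝ (Fin N) → ℝ)
    (hφ : ∀ x ∈ closedBall (0 : EuclideanSpace ℝ (Fin N)) 1, φ x = 0)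
    (h₁ : IntegrableOn
      (fun z : EuclideanSpace ℝ (Fin N) × EuclideanSpace ℝ (Fin N) =>
        (u z.1 - u z.2) * (φ z.1 - φ z.2) / ‖z.1 - z.2‖ ^ ((N : ℝ) + 2 * s))
      (((ball (0 : EuclideanSpace ℝ (Fin N)) 1)ᶜ ×ˢ (ball (0 : EuclideanSpace ℝ (Fin N)) 1)ᶜ)ᶜ))
    (h₂ : IntegrableOn
      (fun z : EuclideanSpace ℝ (Fin N) × EuclideanSpace ℝ (Fin N) =>
        (u z.1 - u z.2) * φ z.1 / ‖z.1 - z.2‖ ^ ((N : ℝ) + 2 * s))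
      ((closedBall (0 : EuclideanSpace ℝ (Fin N)) 1)ᶜ ×ˢ ball (0 : EuclideanSpace ℝ (Fin N)) 1)) :
    (∫ z in (((ball (0 : EuclideanSpace ℝ (Fin N)) 1)ᶜ ×ˢ
        (ball (0 : EuclideanSpace ℝ (Fin N)) 1)ᶜ)ᶜ),
      (u z.1 - u z.2) * (φ z.1 - φ z.2) / ‖z.1 - z.2‖ ^ ((N : ℝ) + 2 * s)) =
    2 * ∫ x in (closedBall (0 : EuclideanSpace ℝ (Fin N)) 1)ᶜ,
      (∫ y in ball (0 : EuclideanSpace ℝ (Fin N)) 1,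
        (u x - u y) / ‖x - y‖ ^ ((N : ℝ) + 2 * s)) * φ x :=
  nonlocal_neumann_integration_by_parts_general N s u φ hφ h₁ h₂
end
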